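/- Let n ≥ p ≥ 1 and set a = p(p−1)/2, c = (n−p)p, d = p(p+1)/2 (so a + c + d = np). There exists an orthogonal np×np real matrix Q̂, depending only on n and p, such that for every real n×p matrix X with XᵀX = I_p and every real n×(n−p) matrix X⊥ with XᵀX⊥ = 0 and X⊥ᵀX⊥ = I_{n−p}, the matrix Q = [I_p⊗X, I_p⊗X⊥]·Q̂ is orthogonal and satisfies Qᵀ·S(X)·Q = diag(−I_a, O_c, I_d), where S(X) = (Xᵀ⊗X)·Π. -/

import Mathlib

/-!
Put `B = [I_p ⊗ X, I_p ⊗ X⊥]`. Orthonormality of `[X, X⊥]` makes `B` orthogonal, and the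
commutation rule `Π (V ⊗ Z) = (Z ⊗ V) Π` turns `Bᵀ S(X) B` into `diag(Π_p, 0)`, where `Π_p` is the
`p² × p²` commutation matrix: `X` drops out, so `Q̂` only has to diagonalise this fixed matrix.
Pairing the coordinate `(i, j)`, `i < j`, with `(j, i)` splits `Π_p` into `p(p-1)/2` copies of the
swap `[[0, 1], [1, 0]]` plus the identity on the `p` diagonal coordinates. The rotation by `π/4`
diagonalises each swap, with the antisymmetric vector for `-1` and the symmetric one for `1`;
ordering these eigenvectors by eigenvalue, with the standard basis of the zero block in the
middle, gives `Q̂`.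
-/

open Matrix
open scoped Kronecker

/-- The commutation (vec-permutation) matrix `Π` with rows indexed by `Fin a × Fin b`
and columns by `Fin b × Fin a`; entry `((j,i),(i',j'))` is `1` iff `i = i'` and `j = j'`. -/
def commMat (a b : ℕ) : Matrix (Fin a × Fin b) (Fin b × Fin a) ℝ :=
  fun r c => if r.1 = c.2 ∧ r.2 = c.1 then 1 else 0

section Commutation

variable {a b c d : ℕ} {γ : Type*}

theorem commMat_mul (M : Matrix (Fin b × Fin a) γ ℝ) :
    commMat a b * M = M.submatrix Prod.swap id := by
  ext ⟨i, j⟩ k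
  simp [commMat, mul_apply, Fintype.sum_prod_type, ite_and]

theorem mul_commMat (M : Matrix γ (Fin a × Fin b) ℝ) :
    M * commMat a b = M.submatrix id Prod.swap := by
  ext k ⟨j, i⟩
  simp [commMat, mul_apply, Fintype.sum_prod_type, ite_and]

theorem commMat_mul_kronecker (V : Matrix (Fin b) (Fin d) ℝ) (Z : Matrix (Fin a) (Fin c) ℝ) :
    commMat a b * (V ⊗ₖ Z) = (Z ⊗ₖ V) * commMat c d := by
  ext ⟨i, j⟩ ⟨k, l⟩
  simp [commMat_mul, mul_commMat, mul_comm]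

theorem kronecker_transpose_mul_kronecker_commMat_mul_kronecker {m n p q r s t : ℕ}
    (U : Matrix (Fin p) (Fin s) ℝ) (Y : Matrix (Fin m) (Fin q) ℝ)
    (A : Matrix (Fin p) (Fin n) ℝ) (B : Matrix (Fin m) (Fin p) ℝ)
    (V : Matrix (Fin p) (Fin t) ℝ) (Z : Matrix (Fin n) (Fin r) ℝ) :
    (U ⊗ₖ Y)ᵀ * ((A ⊗ₖ B) * commMat n p) * (V ⊗ₖ Z) =
      ((Uᵀ * A * Z) ⊗ₖ (Yᵀ * B * V)) * commMat r t := by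
  rw [← kroneckerMap_transpose, Matrix.mul_assoc, Matrix.mul_assoc, commMat_mul_kronecker,
    ← Matrix.mul_assoc, ← Matrix.mul_assoc, mul_kronecker_mul, mul_kronecker_mul]

end Commutation

section StiefelFrame

variable {ι : Type*} [Fintype ι] [DecidableEq ι] {n p q : ℕ}

theorem one_kronecker_transpose_mul_one_kronecker {r : ℕ} (Y : Matrix (Fin n) (Fin q) ℝ)
    (Z : Matrix (Fin n) (Fin r) ℝ) :
    ((1 : Matrix ι ι ℝ) ⊗ₖ Y)ᵀ * ((1 : Matrix ι ι ℝ) ⊗ₖ Z) = (1 : Matrix ι ι ℝ) ⊗ₖ (Yᵀ * Z) := by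
  rw [← kroneckerMap_transpose, ← mul_kronecker_mul, transpose_one, Matrix.one_mul]

theorem fromCols_one_kronecker_transpose_mul_self {X : Matrix (Fin n) (Fin p) ℝ}
    {Xp : Matrix (Fin n) (Fin q) ℝ} (hX : Xᵀ * X = 1) (hXXp : Xᵀ * Xp = 0) (hXp : Xpᵀ * Xp = 1) :
    (fromCols ((1 : Matrix ι ι ℝ) ⊗ₖ X) ((1 : Matrix ι ι ℝ) ⊗ₖ Xp))ᵀ *
      fromCols ((1 : Matrix ι ι ℝ) ⊗ₖ X) ((1 : Matrix ι ι ℝ) ⊗ₖ Xp) = 1 := by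
  have hXpX : Xpᵀ * X = 0 := by rw [← transpose_transpose X, ← transpose_mul, hXXp, transpose_zero]
  rw [transpose_fromCols, fromRows_mul_fromCols]
  simp only [one_kronecker_transpose_mul_one_kronecker, hX, hXXp, hXpX, hXp, one_kronecker_one,
    kronecker_zero, fromBlocks_one]

theorem fromCols_one_kronecker_transpose_mul_kronecker_commMat_mul_fromCols
    {X : Matrix (Fin n) (Fin p) ℝ} {Xp : Matrix (Fin n) (Fin q) ℝ}
    (hX : Xᵀ * X = 1) (hXXp : Xᵀ * Xp = 0) :
    (fromCols ((1 : Matrix (Fin p) (Fin p) ℝ) ⊗ₖ X) ((1 : Matrix (Fin p) (Fin p) ℝ) ⊗ₖ Xp))ᵀ *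
        ((Xᵀ ⊗ₖ X) * commMat n p) *
        fromCols ((1 : Matrix (Fin p) (Fin p) ℝ) ⊗ₖ X) ((1 : Matrix (Fin p) (Fin p) ℝ) ⊗ₖ Xp) =
      fromBlocks (commMat p p) 0 0 0 := by
  have hXpX : Xpᵀ * X = 0 := by rw [← transpose_transpose X, ← transpose_mul, hXXp, transpose_zero]
  rw [transpose_fromCols, fromRows_mul, fromRows_mul_fromCols]
  simp only [kronecker_transpose_mul_kronecker_commMat_mul_kronecker, transpose_one,
    Matrix.one_mul, Matrix.mul_one, hX, hXXp, hXpX, one_kronecker_one, kronecker_zero,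
    zero_kronecker, Matrix.zero_mul]

end StiefelFrame

section PairDecomposition

abbrev UpperPair (p : ℕ) := {q : Fin p × Fin p // q.1 < q.2}

def pairEquiv (p : ℕ) : (Fin 2 × UpperPair p) ⊕ Fin p ≃ Fin p × Fin p where
  toFun := Sum.elim (fun x => if x.1 = 0 then x.2.1 else x.2.1.swap) fun i => (i, i)
  invFun q :=
    if h : q.1 < q.2 then .inl (0, ⟨q, h⟩)
    else if h : q.2 < q.1 then .inl (1, ⟨q.swap, h⟩) else .inr q.1
  left_inv := by
    rintro (⟨k, ⟨⟨i, j⟩, hij⟩⟩ | i)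
    · fin_cases k
      · simp [hij]
      · simp [hij, not_lt_of_gt hij]
    · simp
  right_inv := by
    rintro ⟨i, j⟩
    rcases lt_trichotomy i j with h | rfl | h
    · simp [h]
    · simp
    · simp [h, not_lt_of_gt h]

theorem two_mul_card_upperPair_add (p : ℕ) : 2 * Fintype.card (UpperPair p) + p = p * p := by
  simpa [mul_comm] using Fintype.card_congr (pairEquiv p)

theorem card_upperPair (p : ℕ) : Fintype.card (UpperPair p) = p * (p - 1) / 2 := by
  have := two_mul_card_upperPair_add p
  rw [Nat.mul_sub_one]
  omega

theorem commMat_submatrix_pairEquiv (p : ℕ) :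
    (commMat p p).submatrix (pairEquiv p) (pairEquiv p) =
      fromBlocks (!![0, 1; 1, 0] ⊗ₖ 1) 0 0 1 := by
  ext (⟨k, ⟨⟨i, j⟩, hij⟩⟩ | i) (⟨l, ⟨⟨i', j'⟩, hij'⟩⟩ | i')
  · fin_cases k <;> fin_cases l <;> simp [pairEquiv, commMat, one_apply] <;> grind
  · fin_cases k <;> simp [pairEquiv, commMat] <;> grind
  · fin_cases l <;> simp [pairEquiv, commMat] <;> grind
  · simp [pairEquiv, commMat, one_apply]

end PairDecomposition

section Rotation

noncomputable def rotPiDivFour : Matrix (Fin 2) (Fin 2) ℝ := (√2)⁻¹ • !![1, 1; -1, 1]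

theorem rotPiDivFour_transpose_mul_self : rotPiDivFourᵀ * rotPiDivFour = 1 := by
  have h : (√2)⁻¹ * (√2)⁻¹ * 2 = (1 : ℝ) := by
    rw [← mul_inv, Real.mul_self_sqrt zero_le_two, inv_mul_cancel₀ two_ne_zero]
  ext i j
  fin_cases i <;> fin_cases j <;> simp [rotPiDivFour, mul_apply, Fin.sum_univ_two] <;> linarith

theorem rotPiDivFour_mul_transpose_self : rotPiDivFour * rotPiDivFourᵀ = 1 :=
  mul_eq_one_comm.mp rotPiDivFour_transpose_mul_self

theorem rotPiDivFour_transpose_mul_swap_mul_self :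
    rotPiDivFourᵀ * !![0, 1; 1, 0] * rotPiDivFour = diagonal ![-1, 1] := by
  have h : (√2)⁻¹ * (√2)⁻¹ * 2 = (1 : ℝ) := by
    rw [← mul_inv, Real.mul_self_sqrt zero_le_two, inv_mul_cancel₀ two_ne_zero]
  ext i j
  fin_cases i <;> fin_cases j <;> simp [rotPiDivFour, mul_apply, Fin.sum_univ_two] <;> linarith

end Rotation

section BlockExtension

variable {l m : Type*} [Fintype l] [Fintype m] [DecidableEq m] {α : Type*} [Semiring α]
  (P : Matrix l l α)

theorem fromBlocks_transpose_mul_self [DecidableEq l] (hP : Pᵀ * P = 1) :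
    (fromBlocks P 0 0 (1 : Matrix m m α))ᵀ * fromBlocks P 0 0 1 = 1 := by
  simp [fromBlocks_transpose, fromBlocks_multiply, hP]

theorem fromBlocks_mul_transpose_self [DecidableEq l] (hP : P * Pᵀ = 1) :
    fromBlocks P 0 0 (1 : Matrix m m α) * (fromBlocks P 0 0 1)ᵀ = 1 := by
  simp [fromBlocks_transpose, fromBlocks_multiply, hP]

theorem fromBlocks_transpose_mul_fromBlocks_mul (N : Matrix l l α) (N' : Matrix m m α) :
    (fromBlocks P 0 0 (1 : Matrix m m α))ᵀ * fromBlocks N 0 0 N' * fromBlocks P 0 0 1 =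
      fromBlocks (Pᵀ * N * P) 0 0 N' := by
  simp [fromBlocks_transpose, fromBlocks_multiply]

end BlockExtension

section Reindexing

theorem exists_sum_equiv_fin_sign {α γ δ : Type*} [Fintype α] [Fintype γ] [Fintype δ]
    {a c N : ℕ} (ha : Fintype.card α = a) (hc : Fintype.card γ = c)
    (hN : a + c + Fintype.card δ = N) :
    ∃ ψ : α ⊕ (γ ⊕ δ) ≃ Fin N, ∀ t,
      Sum.elim (fun _ => (-1 : ℝ)) (Sum.elim 0 1) t =
        if (ψ t : ℕ) < a then -1 else if (ψ t : ℕ) < a + c then 0 else 1 := by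
  refine ⟨((Fintype.equivFinOfCardEq ha).sumCongr
      ((Fintype.equivFinOfCardEq hc).sumCongr (Fintype.equivFin δ))).trans
      (((Equiv.refl _).sumCongr finSumFinEquiv).trans
        (finSumFinEquiv.trans (finCongr (by omega)))), ?_⟩
  rintro (x | y | z) <;> simp

variable {m n m' n' α : Type*} [Fintype m] [Fintype m'] [NonUnitalNonAssocSemiring α]

theorem transpose_submatrix_mul_mul_submatrix (Q : Matrix m n α) (N : Matrix m' m' α)
    (f : m' ≃ m) (g : n' → n) :
    (Q.submatrix f g)ᵀ * N * Q.submatrix f g =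
      (Qᵀ * N.submatrix f.symm f.symm * Q).submatrix g g := by
  have hN : N = (N.submatrix f.symm f.symm).submatrix f f := by simp
  conv_lhs => rw [hN]
  rw [transpose_submatrix, submatrix_mul_equiv, submatrix_mul_equiv]

end Reindexing

section PairEigenbasis

variable (p : ℕ)

noncomputable def pairEigenbasis :
    Matrix ((Fin 2 × UpperPair p) ⊕ Fin p) ((Fin 2 × UpperPair p) ⊕ Fin p) ℝ :=
  fromBlocks (rotPiDivFour ⊗ₖ 1) 0 0 1

theorem pairEigenbasis_transpose_mul_self : (pairEigenbasis p)ᵀ * pairEigenbasis p = 1 := by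
  refine fromBlocks_transpose_mul_self _ ?_
  rw [← kroneckerMap_transpose, transpose_one, ← mul_kronecker_mul,
    rotPiDivFour_transpose_mul_self, Matrix.one_mul, one_kronecker_one]

theorem pairEigenbasis_mul_transpose_self : pairEigenbasis p * (pairEigenbasis p)ᵀ = 1 := by
  refine fromBlocks_mul_transpose_self _ ?_
  rw [← kroneckerMap_transpose, transpose_one, ← mul_kronecker_mul,
    rotPiDivFour_mul_transpose_self, Matrix.one_mul, one_kronecker_one]

theorem pairEigenbasis_transpose_mul_commMat_mul :
    (pairEigenbasis p)ᵀ * (commMat p p).submatrix (pairEquiv p) (pairEquiv p) *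
        pairEigenbasis p =
      fromBlocks (diagonal ![-1, 1] ⊗ₖ 1) 0 0 1 := by
  rw [commMat_submatrix_pairEquiv, pairEigenbasis, fromBlocks_transpose_mul_fromBlocks_mul,
    ← kroneckerMap_transpose, transpose_one, ← mul_kronecker_mul, ← mul_kronecker_mul,
    Matrix.one_mul, Matrix.one_mul, rotPiDivFour_transpose_mul_swap_mul_self]

variable {p} {C : Type*} [Fintype C] [DecidableEq C] {c N : ℕ}

theorem exists_equiv_fin_submatrix_pairEigenvalues (hc : Fintype.card C = c)
    (hN : p * p + c = N) :
    ∃ φ : ((Fin 2 × UpperPair p) ⊕ Fin p) ⊕ C ≃ Fin N,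
      (fromBlocks (fromBlocks (diagonal ![-1, 1] ⊗ₖ 1) 0 0 1) 0 0 (0 : Matrix C C ℝ)).submatrix
          φ.symm φ.symm =
        diagonal fun i : Fin N => if (i : ℕ) < p * (p - 1) / 2 then -1
          else if (i : ℕ) < p * (p - 1) / 2 + c then 0 else 1 := by
  have hcard := two_mul_card_upperPair_add p
  obtain ⟨ψ, hψ⟩ := exists_sum_equiv_fin_sign (δ := UpperPair p ⊕ Fin p) (N := N)
    (card_upperPair p) hc (by rw [Fintype.card_sum, Fintype.card_fin, ← card_upperPair]; omega)
  -- `(0, a)` (eigenvalue `-1`) goes first; `(1, a)` and the diagonal (eigenvalue `1`) go last.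
  let τ : ((Fin 2 × UpperPair p) ⊕ Fin p) ⊕ C ≃ UpperPair p ⊕ (C ⊕ (UpperPair p ⊕ Fin p)) :=
    ((((finTwoEquiv.prodCongr (Equiv.refl _)).trans (Equiv.boolProdEquivSum _)).sumCongr
      (Equiv.refl _)).trans (Equiv.sumAssoc _ _ _)).sumCongr (Equiv.refl _) |>.trans
      ((Equiv.sumAssoc _ _ _).trans ((Equiv.refl _).sumCongr (Equiv.sumComm _ _)))
  refine ⟨τ.trans ψ, ?_⟩
  have hdiag : fromBlocks (fromBlocks (diagonal ![-1, 1] ⊗ₖ (1 : Matrix (UpperPair p) _ ℝ)) 0 0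
      (1 : Matrix (Fin p) _ ℝ)) 0 0 (0 : Matrix C C ℝ) =
      diagonal (Sum.elim (fun _ => (-1 : ℝ)) (Sum.elim 0 1) ∘ τ) := by
    rw [← diagonal_one', ← diagonal_one', ← diagonal_zero', diagonal_kronecker_diagonal,
      fromBlocks_diagonal, fromBlocks_diagonal]
    congr 1
    funext t
    rcases t with ((⟨k, a⟩ | i) | x)
    · fin_cases k <;> simp [τ, finTwoEquiv]
    · simp [τ]
    · simp [τ]
  rw [hdiag, submatrix_diagonal_equiv]
  congr 1
  funext i
  simpa using hψ (ψ.symm i)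

theorem exists_orthogonal_transpose_mul_fromBlocks_commMat_mul_eq_diagonal
    (hc : Fintype.card C = c) (hN : p * p + c = N) :
    ∃ Qhat : Matrix ((Fin p × Fin p) ⊕ C) (Fin N) ℝ,
      Qhatᵀ * Qhat = 1 ∧ Qhat * Qhatᵀ = 1 ∧
      Qhatᵀ * fromBlocks (commMat p p) 0 0 (0 : Matrix C C ℝ) * Qhat =
        diagonal fun i : Fin N => if (i : ℕ) < p * (p - 1) / 2 then -1
          else if (i : ℕ) < p * (p - 1) / 2 + c then 0 else 1 := by
  obtain ⟨φ, hφ⟩ := exists_equiv_fin_submatrix_pairEigenvalues hc hN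
  let Q := fromBlocks (pairEigenbasis p) 0 0 (1 : Matrix C C ℝ)
  let e := (pairEquiv p).sumCongr (Equiv.refl C)
  have hblock : (fromBlocks (commMat p p) 0 0 (0 : Matrix C C ℝ)).submatrix e e =
      fromBlocks ((commMat p p).submatrix (pairEquiv p) (pairEquiv p)) 0 0 0 := by
    ext (_ | _) (_ | _) <;> rfl
  refine ⟨Q.submatrix e.symm φ.symm, ?_, ?_, ?_⟩
  · rw [transpose_submatrix, submatrix_mul_equiv,
      fromBlocks_transpose_mul_self _ (pairEigenbasis_transpose_mul_self p), submatrix_one_equiv]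
  · rw [transpose_submatrix, submatrix_mul_equiv,
      fromBlocks_mul_transpose_self _ (pairEigenbasis_mul_transpose_self p), submatrix_one_equiv]
  · rw [transpose_submatrix_mul_mul_submatrix, Equiv.symm_symm, hblock,
      fromBlocks_transpose_mul_fromBlocks_mul, pairEigenbasis_transpose_mul_commMat_mul, hφ]

end PairEigenbasis

theorem stmt7 (n p : ℕ) (hnp : p ≤ n) :
    ∃ Qhat : Matrix ((Fin p × Fin p) ⊕ (Fin p × Fin (n - p))) (Fin (n * p)) ℝ,
      Qhatᵀ * Qhat = 1 ∧ Qhat * Qhatᵀ = 1 ∧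
      ∀ (X : Matrix (Fin n) (Fin p) ℝ), Xᵀ * X = 1 →
        ∀ (Xperp : Matrix (Fin n) (Fin (n - p)) ℝ), Xᵀ * Xperp = 0 → Xperpᵀ * Xperp = 1 →
          (Matrix.fromCols ((1 : Matrix (Fin p) (Fin p) ℝ) ⊗ₖ X)
                ((1 : Matrix (Fin p) (Fin p) ℝ) ⊗ₖ Xperp) * Qhat)ᵀ *
              (Matrix.fromCols ((1 : Matrix (Fin p) (Fin p) ℝ) ⊗ₖ X)
                ((1 : Matrix (Fin p) (Fin p) ℝ) ⊗ₖ Xperp) * Qhat) = 1 ∧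
          (Matrix.fromCols ((1 : Matrix (Fin p) (Fin p) ℝ) ⊗ₖ X)
                ((1 : Matrix (Fin p) (Fin p) ℝ) ⊗ₖ Xperp) * Qhat) *
              (Matrix.fromCols ((1 : Matrix (Fin p) (Fin p) ℝ) ⊗ₖ X)
                ((1 : Matrix (Fin p) (Fin p) ℝ) ⊗ₖ Xperp) * Qhat)ᵀ = 1 ∧
          (Matrix.fromCols ((1 : Matrix (Fin p) (Fin p) ℝ) ⊗ₖ X)
                ((1 : Matrix (Fin p) (Fin p) ℝ) ⊗ₖ Xperp) * Qhat)ᵀ *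
              ((Xᵀ ⊗ₖ X) * commMat n p) *
              (Matrix.fromCols ((1 : Matrix (Fin p) (Fin p) ℝ) ⊗ₖ X)
                ((1 : Matrix (Fin p) (Fin p) ℝ) ⊗ₖ Xperp) * Qhat) =
            Matrix.diagonal (fun i : Fin (n * p) =>
              if (i : ℕ) < p * (p - 1) / 2 then (-1 : ℝ)
              else if (i : ℕ) < p * (p - 1) / 2 + (n - p) * p then 0 else 1) := by
  obtain ⟨Qhat, hQQ, hQQ', hQdiag⟩ :=
    exists_orthogonal_transpose_mul_fromBlocks_commMat_mul_eq_diagonal (p := p)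
      (C := Fin p × Fin (n - p)) (c := (n - p) * p) (N := n * p) (by simp [mul_comm])
      (by rw [← add_mul, Nat.add_sub_cancel' hnp])
  refine ⟨Qhat, hQQ, hQQ', fun X hX Xp hXXp hXp => ?_⟩
  set B := fromCols ((1 : Matrix (Fin p) (Fin p) ℝ) ⊗ₖ X) ((1 : Matrix (Fin p) (Fin p) ℝ) ⊗ₖ Xp)
  have hBB : Bᵀ * B = 1 := fromCols_one_kronecker_transpose_mul_self hX hXXp hXp
  have hBB' : B * Bᵀ = 1 := by
    refine (mul_eq_one_comm_of_equiv ?_).mp hBB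
    exact (Equiv.prodSumDistrib _ _ _).symm.trans
      ((Equiv.refl _).prodCongr (finSumFinEquiv.trans (finCongr (Nat.add_sub_cancel' hnp))))
  have hBSB := fromCols_one_kronecker_transpose_mul_kronecker_commMat_mul_fromCols hX hXXp
  refine ⟨?_, ?_, ?_⟩
  · calc (B * Qhat)ᵀ * (B * Qhat) = Qhatᵀ * (Bᵀ * B) * Qhat := by
          simp only [transpose_mul, Matrix.mul_assoc]
      _ = 1 := by rw [hBB, Matrix.mul_one, hQQ]
  · calc B * Qhat * (B * Qhat)ᵀ = B * (Qhat * Qhatᵀ) * Bᵀ := by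
          simp only [transpose_mul, Matrix.mul_assoc]
      _ = 1 := by rw [hQQ', Matrix.mul_one, hBB']
  · calc (B * Qhat)ᵀ * ((Xᵀ ⊗ₖ X) * commMat n p) * (B * Qhat)
          = Qhatᵀ * (Bᵀ * ((Xᵀ ⊗ₖ X) * commMat n p) * B) * Qhat := by
          simp only [transpose_mul, Matrix.mul_assoc]
      _ = _ := by rw [hBSB, hQdiag]
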